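/- arXiv:1612.03029 — 8 statements merged into one kernel-verified Lean document; each statement's English description precedes it below -/
import Mathlib

section
/- For every set L ⊆ ℝ² and every point x ∈ ℝ², the Voronoi flower of L with respect to x equals the Voronoi flower of the convex hull of L with respect to x: F_x(L) = F_x(convexHull ℝ L). -/
open Metric Real Set MeasureTheory
open scoped RealInnerProductSpace

noncomputable section

/-- The Euclidean plane. -/
abbrev E2 := EuclideanSpace ℝ (Fin 2)

/-- The unit vector `u_θ = (cos θ, sin θ)`. -/
def uvec (θ : ℝ) : E2 := (WithLp.equiv 2 (Fin 2 → ℝ)).symm ![Real.cos θ, Real.sin θ]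

/-- The vector `v_θ = (−sin θ, cos θ)`. -/
def vvec (θ : ℝ) : E2 := (WithLp.equiv 2 (Fin 2 → ℝ)).symm ![-Real.sin θ, Real.cos θ]

/-- The Voronoi flower of `L` with respect to `x`: the union over `s ∈ L` of the closed
balls admitting the segment `[x, s]` as a diameter. -/
def vflower (x : E2) (L : Set E2) : Set E2 :=
  ⋃ s ∈ L, closedBall ((2:ℝ)⁻¹ • (x + s)) (‖s - x‖ / 2)

/-- The support function of `L` with respect to `x`: `p_x(L, w) = sup_{s ∈ L} ⟨s − x, w⟩`. -/
def suppf (x : E2) (L : Set E2) (w : E2) : ℝ :=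
  sSup ((fun s => ⟪s - x, w⟫) '' L)

lemma mem_diam_ball_iff (x s y : E2) :
    y ∈ closedBall ((2:ℝ)⁻¹ • (x + s)) (‖s - x‖ / 2) ↔ ⟪y - x, y - s⟫ ≤ 0 := by
  rw [mem_closedBall, dist_eq_norm]
  have h1 : y - (2:ℝ)⁻¹ • (x + s) = (2:ℝ)⁻¹ • ((y - x) + (y - s)) := by
    module
  have h2 : s - x = (y - x) - (y - s) := by abel
  rw [h1, h2, norm_smul, Real.norm_eq_abs, abs_of_pos (show (0:ℝ) < 2⁻¹ by norm_num)]
  have e1 := norm_add_sq_real (y - x) (y - s)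
  have e2 := norm_sub_sq_real (y - x) (y - s)
  constructor
  · intro h
    nlinarith [norm_nonneg ((y - x) + (y - s)), norm_nonneg ((y - x) - (y - s))]
  · intro h
    have : ‖(y - x) + (y - s)‖ ≤ ‖(y - x) - (y - s)‖ := by
      nlinarith [norm_nonneg ((y - x) + (y - s)), norm_nonneg ((y - x) - (y - s))]
    linarith

/-- the Voronoi flower of a set equals the Voronoi flower of its convex hull. -/
theorem vflower_convexHull (L : Set E2) (x : E2) :
    vflower x L = vflower x (convexHull ℝ L) := by
  apply subset_antisymm
  · exact iUnion₂_mono' fun s hs => ⟨s, subset_convexHull ℝ L hs, subset_rfl⟩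
  · intro y hy
    obtain ⟨s, hs, hmem⟩ := mem_iUnion₂.1 hy
    rw [mem_diam_ball_iff] at hmem
    by_contra hc
    have hall : ∀ s' ∈ L, ⟪y - x, y - s'⟫ > 0 := by
      intro s' hs'
      by_contra h
      exact hc (mem_iUnion₂.2 ⟨s', hs', (mem_diam_ball_iff x s' y).2 (le_of_not_gt h)⟩)
    have hlin : IsLinearMap ℝ fun z : E2 => ⟪y - x, z⟫ :=
      ⟨fun a b => inner_add_right _ _ _, fun c z => real_inner_smul_right _ _ _⟩
    have hconv : Convex ℝ {z : E2 | ⟪y - x, z⟫ < ⟪y - x, y⟫} :=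
      convex_halfSpace_lt hlin _
    have hsub : L ⊆ {z : E2 | ⟪y - x, z⟫ < ⟪y - x, y⟫} := by
      intro s' hs'
      have := hall s' hs'
      rw [inner_sub_right] at this
      exact show ⟪y - x, s'⟫ < ⟪y - x, y⟫ by linarith
    have hmem' : s ∈ {z : E2 | ⟪y - x, z⟫ < ⟪y - x, y⟫} :=
      convexHull_min hsub hconv hs
    rw [inner_sub_right] at hmem
    simp only [mem_setOf_eq] at hmem'
    linarith
end
end

section
/- For every nonempty compact set K ⊆ ℝ² and every x ∈ ℝ², the area of the Voronoi flower satisfies Area(F_x(K)) = (1/2) ∫₀^{2π} (max(p_x(K,u_θ), 0))² dθ. In particular, if x ∈ convexHull ℝ K then Area(F_x(K)) = (1/2) ∫₀^{2π} p_x(K,u_θ)² dθ. -/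
open Metric Real Set MeasureTheory
open scoped RealInnerProductSpace

noncomputable section

/-!
By Thales, the ball with diameter `[x, s]` is `{y | ‖y - x‖² ≤ ⟪y - x, s - x⟫}`, so `y` lies in the
flower exactly when `‖y - x‖² ≤ p_x(K, y - x)`. Since `p_x(K, ·)` is positively homogeneous, in
polar coordinates centred at `x` the flower is `{x + r u_θ | 0 < r ≤ p_x(K, u_θ)}` up to the point
`x`, whose area is `∫ θ, ∫ r in (0, max (p_x(K, u_θ)) 0], r = ½ ∫ θ, max (p_x(K, u_θ)) 0 ^ 2`.
When `x` is in the convex hull of `K` the support function is nonnegative.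
-/

theorem setLIntegral_Ioc_zero_ofReal_id (a : ℝ) :
    ∫⁻ r in Ioc 0 a, ENNReal.ofReal r = ENNReal.ofReal (max a 0 ^ 2 / 2) := by
  rcases le_total a 0 with ha | ha
  · simp [Ioc_eq_empty_of_le ha, max_eq_right ha]
  · rw [← ofReal_integral_eq_lintegral_ofReal (f := fun r => r) continuous_id.integrableOn_Ioc ?_,
      ← intervalIntegral.integral_of_le ha, integral_id, max_eq_left ha]
    · ring_nf
    · exact (ae_restrict_mem measurableSet_Ioc).mono fun r hr => hr.1.le

theorem volume_eq_setLIntegral_of_polar {S : Set (ℝ × ℝ)} (hS : MeasurableSet S) {g : ℝ → ℝ}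
    (hSg : ∀ r θ, 0 < r → θ ∈ Ioo (-π) π → ((r * cos θ, r * sin θ) ∈ S ↔ r ≤ g θ)) :
    volume S = ∫⁻ θ in Ioo (-π) π, ENNReal.ofReal (max (g θ) 0 ^ 2 / 2) := by
  have hmeas : Measurable fun p : ℝ × ℝ =>
      ENNReal.ofReal p.1 * S.indicator 1 (polarCoord.symm p) :=
    (ENNReal.measurable_ofReal.comp measurable_fst).mul
      ((measurable_const.indicator hS).comp continuous_polarCoord_symm.measurable)
  calc volume S = ∫⁻ p, S.indicator 1 p := (lintegral_indicator_one hS).symm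
    _ = ∫⁻ p in Ioi 0 ×ˢ Ioo (-π) π, ENNReal.ofReal p.1 * S.indicator 1 (polarCoord.symm p) :=
      (lintegral_comp_polarCoord_symm _).symm
    _ = ∫⁻ θ in Ioo (-π) π, ∫⁻ r in Ioi 0,
          ENNReal.ofReal r * S.indicator 1 (r * cos θ, r * sin θ) := by
      rw [Measure.volume_eq_prod, ← Measure.prod_restrict, lintegral_prod_symm' _ hmeas]
      rfl
    _ = ∫⁻ θ in Ioo (-π) π, ∫⁻ r in Ioc 0 (g θ), ENNReal.ofReal r := by
      refine setLIntegral_congr_fun measurableSet_Ioo fun θ hθ => ?_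
      rw [← lintegral_indicator measurableSet_Ioc, ← lintegral_indicator measurableSet_Ioi]
      congr 1 with r
      by_cases hr : 0 < r
      · by_cases hrg : r ≤ g θ
        · simp [hr, hrg, (hSg r θ hr hθ).2 hrg]
        · simp [hr, hrg, mt (hSg r θ hr hθ).1 hrg]
      · simp [hr]
    _ = _ := by simp_rw [setLIntegral_Ioc_zero_ofReal_id]

theorem volume_eq_half_integral_sq_of_polar {S : Set (ℝ × ℝ)} (hS : MeasurableSet S)
    {g : ℝ → ℝ} (hg : Continuous g) (hper : Function.Periodic g (2 * π))
    (hSg : ∀ r θ, 0 < r → ((r * cos θ, r * sin θ) ∈ S ↔ r ≤ g θ)) :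
    volume S = ENNReal.ofReal ((1/2) * ∫ θ in (0:ℝ)..(2*π), max (g θ) 0 ^ 2) := by
  set f : ℝ → ℝ := fun θ => max (g θ) 0 ^ 2 / 2
  have hf : Continuous f := by fun_prop
  have hf_per : Function.Periodic f (2 * π) := fun θ => by simp only [f, hper θ]
  have hf_shift : ∫ θ in (-π)..π, f θ = ∫ θ in (0:ℝ)..(2*π), f θ := by
    have := hf_per.intervalIntegral_add_eq (-π) 0
    rwa [show -π + 2 * π = π by ring, zero_add] at this
  rw [volume_eq_setLIntegral_of_polar hS fun r θ hr _ => hSg r θ hr,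
    ← ofReal_integral_eq_lintegral_ofReal ((hf.integrableOn_Icc).mono_set Ioo_subset_Icc_self)
      (Filter.Eventually.of_forall fun θ => by positivity),
    ← integral_Ioc_eq_integral_Ioo, ← intervalIntegral.integral_of_le (by linarith [pi_pos]),
    hf_shift, intervalIntegral.integral_div]
  ring_nf

def euclideanPlaneEquivProd : E2 ≃ᵐ ℝ × ℝ :=
  (MeasurableEquiv.toLp 2 (Fin 2 → ℝ)).symm.trans MeasurableEquiv.finTwoArrow

theorem euclideanPlaneEquivProd_symm_polar (r θ : ℝ) :
    euclideanPlaneEquivProd.symm (r * cos θ, r * sin θ) = r • uvec θ := by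
  ext i; fin_cases i <;> simp [euclideanPlaneEquivProd, uvec]

theorem volume_eq_half_integral_sq_of_smul_uvec_mem_iff {A : Set E2} (hA : MeasurableSet A)
    {g : ℝ → ℝ} (hg : Continuous g) (hper : Function.Periodic g (2 * π))
    (hAg : ∀ r θ, 0 < r → (r • uvec θ ∈ A ↔ r ≤ g θ)) :
    volume A = ENNReal.ofReal ((1/2) * ∫ θ in (0:ℝ)..(2*π), max (g θ) 0 ^ 2) := by
  have hpres : MeasurePreserving euclideanPlaneEquivProd.symm :=
    ((volume_preserving_finTwoArrow ℝ).symm).trans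
      (EuclideanSpace.volume_preserving_symm_measurableEquiv_toLp (Fin 2)).symm
  rw [← hpres.measure_preimage_equiv A]
  refine volume_eq_half_integral_sq_of_polar (euclideanPlaneEquivProd.symm.measurable hA) hg hper
    fun r θ hr => ?_
  rw [mem_preimage, euclideanPlaneEquivProd_symm_polar, hAg r θ hr]

theorem norm_uvec (θ : ℝ) : ‖uvec θ‖ = 1 := by
  simp [EuclideanSpace.norm_eq, uvec, Fin.sum_univ_two]

theorem continuous_uvec : Continuous uvec :=
  (PiLp.continuous_toLp 2 _).comp (by fun_prop)

theorem uvec_add_two_pi (θ : ℝ) : uvec (θ + 2 * π) = uvec θ := by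
  simp [uvec]

theorem mem_closedBall_midpoint_iff {F : Type*} [NormedAddCommGroup F] [InnerProductSpace ℝ F]
    {x s y : F} :
    y ∈ closedBall ((2:ℝ)⁻¹ • (x + s)) (‖s - x‖ / 2) ↔ ‖y - x‖ ^ 2 ≤ ⟪y - x, s - x⟫ := by
  have hy : y - (2:ℝ)⁻¹ • (x + s) = (y - x) - (2:ℝ)⁻¹ • (s - x) := by module
  rw [mem_closedBall, dist_eq_norm, hy, ← sq_le_sq₀ (norm_nonneg _) (by positivity),
    norm_sub_sq_real, real_inner_smul_right, norm_smul, Real.norm_of_nonneg (by norm_num)]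
  constructor <;> intro h <;> nlinarith

section SupportFunction

variable {x : E2} {K : Set E2}

theorem suppf_smul (w : E2) {c : ℝ} (hc : 0 ≤ c) :
    suppf x K (c • w) = c * suppf x K w := by
  rw [suppf, suppf, ← smul_eq_mul, ← Real.sSup_smul_of_nonneg hc, ← image_smul, image_image]
  simp_rw [real_inner_smul_right, smul_eq_mul]

theorem IsCompact.continuous_suppf (hK : IsCompact K) : Continuous (suppf x K) :=
  hK.continuous_sSup (f := fun w s => ⟪s - x, w⟫) (by fun_prop)

theorem IsCompact.inner_le_suppf (hK : IsCompact K) {s : E2} (hs : s ∈ K) (w : E2) :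
    ⟪s - x, w⟫ ≤ suppf x K w :=
  le_csSup (hK.image (by fun_prop)).bddAbove (mem_image_of_mem _ hs)

theorem IsCompact.exists_inner_eq_suppf (hK : IsCompact K) (hKne : K.Nonempty) (w : E2) :
    ∃ s ∈ K, ⟪s - x, w⟫ = suppf x K w :=
  (hK.image (f := fun s => ⟪s - x, w⟫) (by fun_prop)).sSup_mem (hKne.image _)

theorem IsCompact.suppf_nonneg_of_mem_convexHull (hK : IsCompact K) (hx : x ∈ convexHull ℝ K)
    (w : E2) : 0 ≤ suppf x K w := by
  obtain ⟨s, hs, hxs⟩ :=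
    ((innerₗ E2 w).convexOn convex_univ).exists_ge_of_mem_convexHull (subset_univ K) hx
  calc 0 ≤ ⟪s - x, w⟫ := by
        rw [innerₗ_apply_apply, innerₗ_apply_apply] at hxs
        rw [inner_sub_left, real_inner_comm w s, real_inner_comm w x] at *
        linarith
    _ ≤ suppf x K w := hK.inner_le_suppf hs w

theorem mem_vflower_iff (hK : IsCompact K) (hKne : K.Nonempty) {y : E2} :
    y ∈ vflower x K ↔ ‖y - x‖ ^ 2 ≤ suppf x K (y - x) := by
  simp only [vflower, mem_iUnion, exists_prop, mem_closedBall_midpoint_iff]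
  constructor
  · rintro ⟨s, hs, h⟩
    exact h.trans ((real_inner_comm _ _).trans_le (hK.inner_le_suppf hs _))
  · intro h
    obtain ⟨s, hs, hs'⟩ := hK.exists_inner_eq_suppf (x := x) hKne (y - x)
    exact ⟨s, hs, h.trans_eq (hs'.symm.trans (real_inner_comm _ _))⟩

theorem smul_uvec_mem_iff {r : ℝ} (hr : 0 < r) (θ : ℝ) :
    r • uvec θ ∈ {z : E2 | ‖z‖ ^ 2 ≤ suppf x K z} ↔ r ≤ suppf x K (uvec θ) := by
  rw [mem_ofPred_eq, suppf_smul _ hr.le, norm_smul, norm_uvec, Real.norm_of_nonneg hr.le]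
  constructor <;> intro h <;> nlinarith

end SupportFunction

/-- the area of the Voronoi flower as an integral of the squared (truncated)
support function, and the simplification when `x` lies in the convex hull of `K`. -/
theorem area_vflower (K : Set E2) (hKne : K.Nonempty) (hKc : IsCompact K) (x : E2) :
    volume (vflower x K)
      = ENNReal.ofReal ((1/2) * ∫ θ in (0:ℝ)..(2*π), (max (suppf x K (uvec θ)) 0) ^ 2) ∧
    (x ∈ convexHull ℝ K →
      volume (vflower x K)
        = ENNReal.ofReal ((1/2) * ∫ θ in (0:ℝ)..(2*π), (suppf x K (uvec θ)) ^ 2)) := by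
  set A : Set E2 := {z | ‖z‖ ^ 2 ≤ suppf x K z}
  have hA : IsClosed A := isClosed_le (by fun_prop) hKc.continuous_suppf
  have hflower : vflower x K = (fun y => y + -x) ⁻¹' A := by
    ext y
    rw [mem_preimage, ← sub_eq_add_neg]
    exact mem_vflower_iff hKc hKne
  have harea : volume (vflower x K)
      = ENNReal.ofReal ((1/2) * ∫ θ in (0:ℝ)..(2*π), (max (suppf x K (uvec θ)) 0) ^ 2) := by
    rw [hflower, measure_preimage_add_right]
    exact volume_eq_half_integral_sq_of_smul_uvec_mem_iff hA.measurableSet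
      (hKc.continuous_suppf.comp continuous_uvec) (fun θ => by simp [uvec_add_two_pi])
      fun r θ hr => smul_uvec_mem_iff hr θ
  refine ⟨harea, fun hx => harea.trans ?_⟩
  simp_rw [max_eq_left (hKc.suppf_nonneg_of_mem_convexHull hx _)]
end
end

section
/- Let C ⊆ ℝ² be a nonempty compact convex set with 0 ∈ C and let x ∈ ℝ² with x ≠ 0. Then the perpendicular bisector of the segment [0,x], namely the line {y ∈ ℝ² : ⟨y, x⟩ = ‖x‖²/2}, has nonempty intersection with C if and only if x/2 belongs to the Voronoi flower F₀(C), equivalently ‖x/2‖² ≤ p₀(C, x/2). -/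
open Metric Real Set MeasureTheory
open scoped RealInnerProductSpace

noncomputable section

/-- the perpendicular bisector of `[0,x]` meets the convex body `C` iff
`x/2` belongs to the Voronoi flower `F₀(C)`, equivalently `‖x/2‖² ≤ p₀(C, x/2)`. -/
theorem bisector_meets_iff_half_mem_flower (C : Set E2) (hCne : C.Nonempty)
    (hCc : IsCompact C) (hCconv : Convex ℝ C) (h0 : (0:E2) ∈ C)
    (x : E2) (hx : x ≠ 0) :
    (({y : E2 | ⟪y, x⟫ = ‖x‖ ^ 2 / 2} ∩ C).Nonempty ↔ (2:ℝ)⁻¹ • x ∈ vflower 0 C) ∧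
    ((2:ℝ)⁻¹ • x ∈ vflower 0 C ↔ ‖(2:ℝ)⁻¹ • x‖ ^ 2 ≤ suppf 0 C ((2:ℝ)⁻¹ • x)) := by
  have hxpos : (0:ℝ) < ‖x‖ ^ 2 := by
    have := norm_pos_iff.mpr hx
    positivity
  have key : ∀ s : E2,
      (2:ℝ)⁻¹ • x ∈ closedBall ((2:ℝ)⁻¹ • ((0:E2) + s)) (‖s - 0‖ / 2) ↔
        ‖x‖ ^ 2 / 2 ≤ ⟪s, x⟫ := by
    intro s
    rw [mem_closedBall, dist_eq_norm, zero_add, sub_zero, ← smul_sub, norm_smul]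
    have h2 : ‖(2:ℝ)⁻¹‖ = (2:ℝ)⁻¹ := by norm_num [Real.norm_eq_abs]
    rw [h2]
    have hsq := norm_sub_sq_real x s
    constructor
    · intro h
      have h' : ‖x - s‖ ≤ ‖s‖ := by linarith
      have hsqle : ‖x - s‖ ^ 2 ≤ ‖s‖ ^ 2 := by
        nlinarith [norm_nonneg (x - s), norm_nonneg s]
      rw [real_inner_comm]
      nlinarith
    · intro h
      rw [real_inner_comm] at h
      have hsqle : ‖x - s‖ ^ 2 ≤ ‖s‖ ^ 2 := by nlinarith
      have h' : ‖x - s‖ ≤ ‖s‖ := by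
        nlinarith [norm_nonneg (x - s), norm_nonneg s]
      linarith
  have flower_iff : (2:ℝ)⁻¹ • x ∈ vflower 0 C ↔ ∃ s ∈ C, ‖x‖ ^ 2 / 2 ≤ ⟪s, x⟫ := by
    simp only [vflower, mem_iUnion₂]
    constructor
    · rintro ⟨s, hs, h⟩; exact ⟨s, hs, (key s).mp h⟩
    · rintro ⟨s, hs, h⟩; exact ⟨s, hs, (key s).mpr h⟩
  have hcont : Continuous fun s : E2 => ⟪s - (0:E2), (2:ℝ)⁻¹ • x⟫ :=
    (continuous_id.sub continuous_const).inner continuous_const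
  have hnw : ‖(2:ℝ)⁻¹ • x‖ ^ 2 = ‖x‖ ^ 2 / 4 := by
    rw [norm_smul]
    have h2 : ‖(2:ℝ)⁻¹‖ = (2:ℝ)⁻¹ := by norm_num [Real.norm_eq_abs]
    rw [h2]; ring
  have hin : ∀ s : E2, ⟪s - (0:E2), (2:ℝ)⁻¹ • x⟫ = (2:ℝ)⁻¹ * ⟪s, x⟫ := by
    intro s; rw [sub_zero, real_inner_smul_right]
  constructor
  · constructor
    · rintro ⟨y, hy, hyC⟩
      exact flower_iff.mpr ⟨y, hyC, le_of_eq hy.symm⟩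
    · intro h
      obtain ⟨s, hs, hsx⟩ := flower_iff.mp h
      have hpos : 0 < ⟪s, x⟫ := lt_of_lt_of_le (by linarith) hsx
      set t : ℝ := (‖x‖ ^ 2 / 2) / ⟪s, x⟫ with ht
      have ht0 : 0 ≤ t := by positivity
      have ht1 : t ≤ 1 := (div_le_one hpos).mpr hsx
      refine ⟨t • s, ?_, ?_⟩
      · show ⟪t • s, x⟫ = ‖x‖ ^ 2 / 2
        rw [real_inner_smul_left, ht, div_mul_cancel₀ _ (ne_of_gt hpos)]
      · have := hCconv h0 hs (by linarith : (0:ℝ) ≤ 1 - t) ht0 (by ring)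
        simpa using this
  · constructor
    · intro h
      obtain ⟨s, hs, hsx⟩ := flower_iff.mp h
      have hb : BddAbove ((fun s => ⟪s - (0:E2), (2:ℝ)⁻¹ • x⟫) '' C) :=
        (hCc.image hcont).bddAbove
      have hle : ⟪s - (0:E2), (2:ℝ)⁻¹ • x⟫ ≤ suppf 0 C ((2:ℝ)⁻¹ • x) :=
        le_csSup hb ⟨s, hs, rfl⟩
      rw [hin s] at hle
      rw [hnw]
      linarith
    · intro h
      have himgc : IsCompact ((fun s => ⟪s - (0:E2), (2:ℝ)⁻¹ • x⟫) '' C) :=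
        hCc.image hcont
      obtain ⟨s, hs, hse⟩ := himgc.sSup_mem (hCne.image _)
      refine flower_iff.mpr ⟨s, hs, ?_⟩
      have : suppf 0 C ((2:ℝ)⁻¹ • x) = (2:ℝ)⁻¹ * ⟪s, x⟫ := by
        rw [suppf, ← hse]; simpa using hin s
      rw [hnw, this] at h
      linarith
end
end

section
/- Define Φ : ℝ⁴ → ℝ² × ℝ² by Φ(r, θ, θ₁, θ₂) = (x₁, x₂) where x₁ = 2 r sin(θ − θ₁) · (−sin θ₁, cos θ₁) and x₂ = 2 r sin(θ − θ₂) · (−sin θ₂, cos θ₂); geometrically, x₁ and x₂ are the reflections of the origin in the lines passing through the point r·u_θ with directions u_{θ₁} and u_{θ₂} respectively. Then Φ is differentiable, and for every r > 0, θ ∈ (0, 2π) and θ − π < θ₁ < θ₂ < θ, the absolute value of the determinant of the total derivative of Φ at (r, θ, θ₁, θ₂) (viewing Φ as a map ℝ⁴ → ℝ⁴) equals 16 r³ |sin(θ₁ − θ₂) · sin(θ − θ₂) · sin(θ − θ₁)|. -/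
open Metric Real Set MeasureTheory
open scoped RealInnerProductSpace

noncomputable section

/-- The Blaschke–Petkantschin-type map `(r, θ, θ₁, θ₂) ↦ (x₁, x₂)`, written as a map
`ℝ⁴ → ℝ⁴`: the coordinates `0,1` are those of `x₁ = 2 r sin(θ−θ₁) · (−sin θ₁, cos θ₁)`
and the coordinates `2,3` are those of `x₂ = 2 r sin(θ−θ₂) · (−sin θ₂, cos θ₂)`. -/
def PhiBP (p : Fin 4 → ℝ) : Fin 4 → ℝ :=
  ![2 * p 0 * Real.sin (p 1 - p 2) * (-Real.sin (p 2)),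
    2 * p 0 * Real.sin (p 1 - p 2) * (Real.cos (p 2)),
    2 * p 0 * Real.sin (p 1 - p 3) * (-Real.sin (p 3)),
    2 * p 0 * Real.sin (p 1 - p 3) * (Real.cos (p 3))]

/-!
In the moving frame `(u_{θᵢ}, v_{θᵢ})` the point `xᵢ = 2 r sin(θ − θᵢ) v_{θᵢ}` has partial
derivatives `2 sin(θ − θᵢ) v`, `2 r cos(θ − θᵢ) v` in `r, θ` and
`−2 r cos(θ − θᵢ) v − 2 r sin(θ − θᵢ) u` in `θᵢ`, since `∂v_φ/∂φ = −u_φ`. So the Jacobian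
matrix is a block rotation (determinant `1`) times a sparse matrix whose `u`-rows have a
single nonzero entry `−2 r sin(θ − θᵢ)`; expanding along them leaves
`4 r² sin(θ − θ₁) sin(θ − θ₂)` times the `2 × 2` minor `4 r sin(θ₂ − θ₁)` of the `v`-rows.
-/

namespace PhiBP

open Matrix

def frame (a b : ℝ) : Matrix (Fin 4) (Fin 4) ℝ :=
  !![cos a, -sin a, 0, 0;
     sin a, cos a, 0, 0;
     0, 0, cos b, -sin b;
     0, 0, sin b, cos b]

/-- Rows: the `u_a`, `v_a`, `u_b`, `v_b` components of the partial derivatives of `PhiBP` at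
`(r, θ, a, b)`. -/
def frameJacobian (r θ a b : ℝ) : Matrix (Fin 4) (Fin 4) ℝ :=
  !![0, 0, -(2 * r * sin (θ - a)), 0;
     2 * sin (θ - a), 2 * r * cos (θ - a), -(2 * r * cos (θ - a)), 0;
     0, 0, 0, -(2 * r * sin (θ - b));
     2 * sin (θ - b), 2 * r * cos (θ - b), 0, -(2 * r * cos (θ - b))]

lemma det_frame (a b : ℝ) : (frame a b).det = 1 := by
  simp [frame, det_succ_row_zero, Fin.sum_univ_succ, Fin.succAbove, ← pow_two, cos_sq_add_sin_sq]

lemma det_frameJacobian (r θ a b : ℝ) :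
    (frameJacobian r θ a b).det = 16 * r ^ 3 * (sin (a - b) * sin (θ - b) * sin (θ - a)) := by
  have hsin : sin (a - b) = sin (θ - b) * cos (θ - a) - cos (θ - b) * sin (θ - a) := by
    rw [← sin_sub]; congr 1; ring
  rw [det_succ_row_zero, Fin.sum_univ_four, hsin]
  simp only [frameJacobian, det_fin_three, submatrix_apply, of_apply, Fin.succAbove, Fin.reduceLT,
    Fin.reduceCastSucc, Fin.reduceSucc, ↓reduceIte, cons_val, Fin.isValue, Fin.coe_ofNat_eq_mod]
  ring

lemma hasFDerivAt (x : Fin 4 → ℝ) :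
    HasFDerivAt PhiBP
      (toLin' (frame (x 2) (x 3) * frameJacobian (x 0) (x 1) (x 2) (x 3))).toContinuousLinearMap
      x := by
  have coord (k : Fin 4) {g : ℝ → ℝ} {g' : ℝ} (hg : HasDerivAt g g' (x k)) :=
    (((hasFDerivAt_apply 0 x).const_mul (2 : ℝ)).mul
      ((hasFDerivAt_apply 1 x).sub (hasFDerivAt_apply k x)).sin).mul
      (hg.comp_hasFDerivAt x (hasFDerivAt_apply k x))
  rw [hasFDerivAt_pi']
  intro i
  fin_cases i <;>
    [refine (coord 2 (hasDerivAt_sin _).neg).congr_fderiv ?_;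
     refine (coord 2 (hasDerivAt_cos _)).congr_fderiv ?_;
     refine (coord 3 (hasDerivAt_sin _).neg).congr_fderiv ?_;
     refine (coord 3 (hasDerivAt_cos _)).congr_fderiv ?_] <;>
  · ext v
    simp only [_root_.add_apply, _root_.smul_apply, _root_.sub_apply, ContinuousLinearMap.proj_apply,
      ContinuousLinearMap.comp_apply, LinearMap.coe_toContinuousLinearMap', toLin'_apply,
      mulVec, dotProduct, Fin.sum_univ_four, mul_apply, frame, frameJacobian, of_apply, cons_val,
      Fin.isValue, Fin.zero_eta, Fin.mk_one, Fin.reduceFinMk, Pi.mul_apply, Pi.sub_apply, Pi.neg_apply,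
      Function.comp_apply, smul_eq_mul]
    ring

end PhiBP

/-- `Φ` is differentiable and, for `r > 0`, `θ ∈ (0, 2π)` and
`θ − π < θ₁ < θ₂ < θ`, the absolute value of the Jacobian determinant of `Φ` at
`(r, θ, θ₁, θ₂)` equals `16 r³ |sin(θ₁−θ₂) sin(θ−θ₂) sin(θ−θ₁)|`. -/
theorem jacobian_PhiBP :
    Differentiable ℝ PhiBP ∧
    ∀ r θ θ₁ θ₂ : ℝ, 0 < r → θ ∈ Ioo 0 (2*π) → θ - π < θ₁ → θ₁ < θ₂ → θ₂ < θ →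
      |LinearMap.det ((fderiv ℝ PhiBP ![r, θ, θ₁, θ₂]).toLinearMap)|
        = 16 * r ^ 3 * |Real.sin (θ₁ - θ₂) * Real.sin (θ - θ₂) * Real.sin (θ - θ₁)| := by
  refine ⟨fun x => (PhiBP.hasFDerivAt x).differentiableAt, ?_⟩
  intro r θ θ₁ θ₂ hr _ _ _ _
  rw [(PhiBP.hasFDerivAt _).fderiv, LinearMap.coe_toContinuousLinearMap, LinearMap.det_toLin',
    Matrix.det_mul]
  simp only [Matrix.cons_val]
  rw [PhiBP.det_frame, PhiBP.det_frameJacobian, one_mul, abs_mul,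
    abs_of_pos (by positivity : (0 : ℝ) < 16 * r ^ 3)]
end
end

section
/- Let D ⊆ ℝ² be a compact set with 0 ∈ interior D. Then there exists a compact convex set K with 0 ∈ interior K such that D is the Voronoi flower of K with respect to the origin, D = F₀(K), if and only if the complement ℝ² \ i(D \ {0}) of the image of D \ {0} under the inversion i is a convex set. -/
/-!
For `y ≠ 0` and any `s`, `y` lies in the disc with diameter `[0, s]` iff `‖y‖² ≤ ⟪s, y⟫`, i.e.
iff `1 ≤ ⟪s, i y⟫`. Hence the complement of `i (F₀(K) \ {0})` is the strict polar
`{w | ∀ s ∈ K, ⟪s, w⟫ < 1}`, an intersection of open half-planes, and is convex.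
Conversely, if `C = (i (D \ {0}))ᶜ` is convex, it is open (as `D` is compact), bounded (as `D` is a
neighbourhood of `0`) and contains `0`. Its polar `K` is then a compact convex neighbourhood of `0`,
and by Hahn–Banach the strict polar of `K` is `C` again, so `F₀(K)` and `D` have the same image
under `i` away from `0`.
-/

open Metric Real Set MeasureTheory
open scoped RealInnerProductSpace

noncomputable section

open EuclideanGeometry Filter Topology

section InnerProductSpace

variable {F : Type*} [NormedAddCommGroup F] [InnerProductSpace ℝ F]

def innerPolar (C : Set F) : Set F := {s | ∀ w ∈ C, ⟪w, s⟫ ≤ 1}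

def innerStrictPolar (K : Set F) : Set F := {w | ∀ s ∈ K, ⟪s, w⟫ < 1}

lemma innerPolar_eq_biInter (C : Set F) : innerPolar C = ⋂ w ∈ C, innerSL ℝ w ⁻¹' Iic 1 := by
  ext; simp [innerPolar]

lemma convex_innerPolar (C : Set F) : Convex ℝ (innerPolar C) := by
  rw [innerPolar_eq_biInter]
  exact convex_iInter₂ fun w _ => (convex_Iic 1).linear_preimage (innerSL ℝ w).toLinearMap

lemma isClosed_innerPolar (C : Set F) : IsClosed (innerPolar C) := by
  rw [innerPolar_eq_biInter]
  exact isClosed_biInter fun w _ => isClosed_Iic.preimage (innerSL ℝ w).continuous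

lemma convex_innerStrictPolar (K : Set F) : Convex ℝ (innerStrictPolar K) := by
  have hbiInter : innerStrictPolar K = ⋂ s ∈ K, innerSL ℝ s ⁻¹' Iio 1 := by
    ext; simp [innerStrictPolar]
  rw [hbiInter]
  exact convex_iInter₂ fun s _ => (convex_Iio 1).linear_preimage (innerSL ℝ s).toLinearMap

lemma isBounded_innerPolar {C : Set F} (hC : C ∈ 𝓝 0) : Bornology.IsBounded (innerPolar C) := by
  obtain ⟨r, hr, hrC⟩ := nhds_basis_closedBall.mem_iff.1 hC
  refine (isBounded_closedBall (x := (0 : F)) (r := r⁻¹)).subset fun s hs => ?_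
  rw [mem_closedBall_zero_iff]
  rcases eq_or_ne s 0 with rfl | hs0
  · simpa using hr.le
  have hsn : 0 < ‖s‖ := norm_pos_iff.2 hs0
  have hw : (r / ‖s‖) • s ∈ closedBall 0 r := by
    rw [mem_closedBall_zero_iff, norm_smul, norm_div, norm_norm, Real.norm_of_nonneg hr.le,
      div_mul_cancel₀ r hsn.ne']
  have hle := hs _ (hrC hw)
  rw [real_inner_smul_left, real_inner_self_eq_norm_sq] at hle
  calc ‖s‖ = r⁻¹ * (r / ‖s‖ * ‖s‖ ^ 2) := by field_simp
    _ ≤ r⁻¹ * 1 := by gcongr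
    _ = r⁻¹ := mul_one _

lemma innerPolar_mem_nhds_zero {C : Set F} (hC : Bornology.IsBounded C) : innerPolar C ∈ 𝓝 0 := by
  obtain ⟨R, hR, hCR⟩ := hC.subset_closedBall_lt 0 0
  refine mem_of_superset (ball_mem_nhds 0 (inv_pos.2 hR)) fun s hs w hw => ?_
  calc ⟪w, s⟫ ≤ ‖w‖ * ‖s‖ := real_inner_le_norm w s
    _ ≤ R * R⁻¹ := by
      gcongr
      · simpa using hCR hw
      · simpa using (mem_ball_zero_iff.1 hs).le
    _ = 1 := mul_inv_cancel₀ hR.ne'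

lemma innerStrictPolar_innerPolar [CompleteSpace F] {C : Set F} (hconv : Convex ℝ C)
    (hopen : IsOpen C) (h0 : (0 : F) ∈ C) : innerStrictPolar (innerPolar C) = C := by
  ext w
  constructor
  · intro hw
    by_contra hwC
    obtain ⟨f, hf⟩ := geometric_hahn_banach_open_point hconv hopen hwC
    have hfw : 0 < f w := by simpa using hf 0 h0
    set v := (InnerProductSpace.toDual ℝ F).symm f
    have hv : ∀ x, ⟪v, x⟫ = f x := fun x => InnerProductSpace.toDual_symm_apply
    have hs : (f w)⁻¹ • v ∈ innerPolar C := fun x hx => by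
      rw [real_inner_smul_right, real_inner_comm, hv, inv_mul_le_iff₀ hfw, mul_one]
      exact (hf x hx).le
    have h1 := hw _ hs
    rw [real_inner_smul_left, hv, inv_mul_cancel₀ hfw.ne'] at h1
    exact lt_irrefl 1 h1
  · intro hw s hs
    have hscale : Tendsto (fun c : ℝ => c • w) (𝓝[>] 1) (𝓝 w) := by
      have hcont : Continuous fun c : ℝ => c • w := by fun_prop
      simpa using (hcont.tendsto 1).mono_left nhdsWithin_le_nhds
    obtain ⟨c, hcw, hc⟩ :=
      ((hscale.eventually (hopen.mem_nhds hw)).and self_mem_nhdsWithin).exists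
    have h1 := hs _ hcw
    rw [real_inner_smul_left, real_inner_comm] at h1
    nlinarith [show (1 : ℝ) < c from hc]

lemma inversion_zero_one_apply (w : F) : inversion (0 : F) 1 w = (‖w‖ ^ 2)⁻¹ • w := by
  simp [inversion, dist_eq_norm]

lemma norm_inversion_zero_one (w : F) : ‖inversion (0 : F) 1 w‖ = ‖w‖⁻¹ := by
  simpa [dist_eq_norm, one_div] using dist_inversion_center (0 : F) w 1

lemma mem_image_inversion_diff_zero_iff {D : Set F} {w : F} :
    w ∈ inversion (0 : F) 1 '' (D \ {0}) ↔ w ≠ 0 ∧ inversion (0 : F) 1 w ∈ D := by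
  rw [(inversion_involutive (0 : F) one_ne_zero).image_eq_preimage_symm]
  simp [inversion_eq_center one_ne_zero, and_comm]

lemma norm_sq_le_inner_iff_one_le_inner_inversion {y : F} (hy : y ≠ 0) (s : F) :
    ‖y‖ ^ 2 ≤ ⟪s, y⟫ ↔ 1 ≤ ⟪s, inversion (0 : F) 1 y⟫ := by
  have hy2 : 0 < ‖y‖ ^ 2 := by positivity
  rw [inversion_zero_one_apply, real_inner_smul_right, le_inv_mul_iff₀ hy2, mul_one]

lemma isClosed_image_inversion_diff_zero {D : Set F} (hDc : IsClosed D)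
    (hDb : Bornology.IsBounded D) : IsClosed (inversion (0 : F) 1 '' (D \ {0})) := by
  obtain ⟨R, hR, hDR⟩ := hDb.subset_closedBall_lt 0 0
  have hpos : ∀ w ∈ {w : F | R⁻¹ ≤ ‖w‖}, w ≠ 0 := fun w hw h => by
    simp only [mem_ofPred_eq, h, norm_zero] at hw
    exact (inv_pos.2 hR).not_ge hw
  have hA : inversion (0 : F) 1 '' (D \ {0}) = {w | R⁻¹ ≤ ‖w‖} ∩ inversion 0 1 ⁻¹' D := by
    ext w
    rw [mem_image_inversion_diff_zero_iff, mem_inter_iff, mem_preimage]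
    refine ⟨fun ⟨_, hwD⟩ => ⟨?_, hwD⟩, fun ⟨hw, hwD⟩ => ⟨hpos w hw, hwD⟩⟩
    have := mem_closedBall_zero_iff.1 (hDR hwD)
    rwa [norm_inversion_zero_one, inv_le_comm₀ (norm_pos_iff.2 ‹_›) hR] at this
  rw [hA]
  exact (continuousOn_const.inversion continuousOn_const continuousOn_id hpos)
    |>.preimage_isClosed_of_isClosed (isClosed_le continuous_const continuous_norm) hDc

lemma isBounded_compl_image_inversion_diff_zero {D : Set F} (hD : D ∈ 𝓝 0) :
    Bornology.IsBounded (inversion (0 : F) 1 '' (D \ {0}))ᶜ := by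
  obtain ⟨ε, hε, hεD⟩ := Metric.mem_nhds_iff.1 hD
  refine (isBounded_closedBall (x := (0 : F)) (r := ε⁻¹)).subset fun w hw => ?_
  rw [mem_closedBall_zero_iff]
  by_contra! hlt
  have hw0 : w ≠ 0 := norm_pos_iff.1 ((inv_pos.2 hε).trans hlt)
  refine hw (mem_image_inversion_diff_zero_iff.2 ⟨hw0, hεD ?_⟩)
  rw [mem_ball_zero_iff, norm_inversion_zero_one]
  exact inv_lt_of_inv_lt₀ hε hlt

lemma eq_of_image_inversion_diff_zero_eq {D D' : Set F} (hD : (0 : F) ∈ D) (hD' : (0 : F) ∈ D')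
    (h : inversion (0 : F) 1 '' (D \ {0}) = inversion (0 : F) 1 '' (D' \ {0})) : D = D' := by
  have hdiff := (inversion_injective (0 : F) one_ne_zero).image_injective h
  rw [← insert_eq_of_mem hD, ← insert_eq_of_mem hD', ← insert_sdiff_singleton, hdiff,
    insert_sdiff_singleton]

lemma norm_sub_half_smul_le_iff (y s : F) : ‖y - (2 : ℝ)⁻¹ • s‖ ≤ ‖s‖ / 2 ↔ ‖y‖ ^ 2 ≤ ⟪s, y⟫ := by
  have hsq : ‖y - (2 : ℝ)⁻¹ • s‖ ^ 2 = ‖y‖ ^ 2 - ⟪s, y⟫ + (‖s‖ / 2) ^ 2 := by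
    rw [norm_sub_sq_real, real_inner_smul_right, norm_smul, real_inner_comm]
    norm_num
    ring
  rw [← pow_le_pow_iff_left₀ (norm_nonneg _) (by positivity) two_ne_zero, hsq]
  constructor <;> intro h <;> linarith

end InnerProductSpace

lemma mem_vflower_zero_iff {K : Set E2} {y : E2} :
    y ∈ vflower 0 K ↔ ∃ s ∈ K, ‖y‖ ^ 2 ≤ ⟪s, y⟫ := by
  simp only [vflower, mem_iUnion₂, mem_closedBall, dist_eq_norm, zero_add, sub_zero,
    norm_sub_half_smul_le_iff, exists_prop]

lemma compl_image_inversion_vflower_zero (K : Set E2) :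
    (inversion (0 : E2) 1 '' (vflower 0 K \ {0}))ᶜ = innerStrictPolar K := by
  ext w
  rw [mem_compl_iff, mem_image_inversion_diff_zero_iff, mem_vflower_zero_iff]
  rcases eq_or_ne w 0 with rfl | hw
  · simp [innerStrictPolar]
  have hiw : inversion (0 : E2) 1 w ≠ 0 := (inversion_eq_center one_ne_zero).not.2 hw
  simp only [norm_sq_le_inner_iff_one_le_inner_inversion hiw, inversion_inversion _ one_ne_zero,
    ne_eq, hw, not_false_eq_true, true_and, not_exists, not_and, not_le]
  rfl

/-- a compact set `D` with `0` in its interior is the Voronoi flower of a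
compact convex set `K` with `0 ∈ interior K` iff the complement of the image of
`D \ {0}` under the inversion `i` is convex. -/
theorem isVoronoiFlower_iff_inversion_compl_convex (D : Set E2) (hDc : IsCompact D)
    (h0 : (0:E2) ∈ interior D) :
    (∃ K : Set E2, IsCompact K ∧ Convex ℝ K ∧ (0:E2) ∈ interior K ∧ D = vflower 0 K)
      ↔ Convex ℝ ((EuclideanGeometry.inversion (0:E2) 1 '' (D \ {0}))ᶜ) := by
  constructor
  · rintro ⟨K, -, -, -, rfl⟩
    rw [compl_image_inversion_vflower_zero]
    exact convex_innerStrictPolar K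
  · intro hconv
    set C := (inversion (0 : E2) 1 '' (D \ {0}))ᶜ
    have hCopen : IsOpen C :=
      (isClosed_image_inversion_diff_zero hDc.isClosed hDc.isBounded).isOpen_compl
    have hC0 : (0 : E2) ∈ C := mem_image_inversion_diff_zero_iff.not.2 fun h => h.1 rfl
    have hK0 : innerPolar C ∈ 𝓝 0 := innerPolar_mem_nhds_zero
      (isBounded_compl_image_inversion_diff_zero (mem_interior_iff_mem_nhds.1 h0))
    refine ⟨innerPolar C, isCompact_of_isClosed_isBounded (isClosed_innerPolar C)
      (isBounded_innerPolar (hCopen.mem_nhds hC0)), convex_innerPolar C,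
      mem_interior_iff_mem_nhds.2 hK0, ?_⟩
    refine eq_of_image_inversion_diff_zero_eq (interior_subset h0) ?_ ?_
    · exact mem_vflower_zero_iff.2 ⟨0, mem_of_mem_nhds hK0, by simp⟩
    · rw [← compl_inj_iff, compl_image_inversion_vflower_zero,
        innerStrictPolar_innerPolar hconv hCopen hC0]
end
end

section
/- Let K₁, K₂ ⊆ ℝ² be nonempty compact convex sets, each containing the origin. If their Voronoi flowers with respect to the origin coincide, F₀(K₁) = F₀(K₂), then K₁ = K₂. (A convex body is uniquely determined by its Voronoi flower.) -/
open Metric Real Set MeasureTheory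
open scoped RealInnerProductSpace

noncomputable section

/-!
The flower `F₀(K)` contains the point `(c / ‖w‖²) • w` (with `c > 0`) exactly when `K` meets the
half-plane `{s | c ≤ ⟪w, s⟫}`. Hence the flower knows which half-planes avoiding the origin meet
`K`, and a closed convex set containing the origin is the intersection of the complements of the
half-planes it avoids.
-/

theorem mem_closedBall_half_smul_iff {F : Type*} [NormedAddCommGroup F] [InnerProductSpace ℝ F]
    {y s : F} : y ∈ closedBall ((2:ℝ)⁻¹ • s) (‖s‖ / 2) ↔ ‖y‖ ^ 2 ≤ ⟪y, s⟫ := by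
  have hr : ‖s‖ / 2 = ‖(2:ℝ)⁻¹ • s‖ := by rw [norm_smul]; norm_num; ring
  rw [mem_closedBall, dist_eq_norm, hr, ← sq_le_sq₀ (norm_nonneg _) (norm_nonneg _),
    norm_sub_sq_real, real_inner_smul_right]
  constructor <;> intro h <;> linarith

theorem mem_vflower_zero {K : Set E2} {y : E2} :
    y ∈ vflower 0 K ↔ ∃ s ∈ K, ‖y‖ ^ 2 ≤ ⟪y, s⟫ := by
  simp only [vflower, mem_iUnion, exists_prop, zero_add, sub_zero, mem_closedBall_half_smul_iff]

theorem smul_mem_vflower_zero_iff {K : Set E2} {w : E2} {c : ℝ} (hw : w ≠ 0) (hc : 0 < c) :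
    (c / ‖w‖ ^ 2) • w ∈ vflower 0 K ↔ ∃ s ∈ K, c ≤ ⟪w, s⟫ := by
  have hw2 : 0 < ‖w‖ ^ 2 := by positivity
  rw [mem_vflower_zero]
  refine exists_congr fun s => and_congr_right fun _ => ?_
  have hnorm : ‖(c / ‖w‖ ^ 2) • w‖ ^ 2 = c ^ 2 / ‖w‖ ^ 2 := by
    rw [norm_smul, mul_pow, Real.norm_eq_abs, sq_abs, div_pow]
    field_simp
  rw [hnorm, real_inner_smul_left, div_mul_eq_mul_div, div_le_div_iff_of_pos_right hw2, sq,
    mul_le_mul_iff_right₀ hc]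

theorem subset_of_vflower_zero_subset {K₁ K₂ : Set E2} (hclosed : IsClosed K₂)
    (hclosedonv : Convex ℝ K₂) (h0 : (0 : E2) ∈ K₂) (hF : vflower 0 K₁ ⊆ vflower 0 K₂) :
    K₁ ⊆ K₂ := by
  intro x hx
  by_contra hxK
  obtain ⟨f, u, hfK, hfx⟩ := geometric_hahn_banach_closed_point hclosedonv hclosed hxK
  set w : E2 := (InnerProductSpace.toDual ℝ E2).symm f
  have hf : ∀ y, f y = ⟪w, y⟫ := fun y => by simp [w]
  have hu : 0 < u := by simpa using hfK 0 h0
  have hc : 0 < f x := hu.trans hfx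
  have hw : w ≠ 0 := fun hw0 => by simp [hf, hw0] at hc
  obtain ⟨s, hs, hfs⟩ := (smul_mem_vflower_zero_iff hw hc).mp <|
    hF <| (smul_mem_vflower_zero_iff hw hc).mpr ⟨x, hx, (hf x).le⟩
  linarith [hf s, hfK s hs]

theorem vflower_injective_general (K₁ K₂ : Set E2)
    (h₁c : IsCompact K₁) (h₁conv : Convex ℝ K₁) (h₁0 : (0:E2) ∈ K₁)
    (h₂c : IsCompact K₂) (h₂conv : Convex ℝ K₂) (h₂0 : (0:E2) ∈ K₂)
    (hF : vflower 0 K₁ = vflower 0 K₂) : K₁ = K₂ :=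
  (subset_of_vflower_zero_subset h₂c.isClosed h₂conv h₂0 hF.le).antisymm
    (subset_of_vflower_zero_subset h₁c.isClosed h₁conv h₁0 hF.ge)

/-- a convex body containing the origin is uniquely determined by its
Voronoi flower with respect to the origin. -/
theorem vflower_injective (K₁ K₂ : Set E2)
    (h₁ne : K₁.Nonempty) (h₁c : IsCompact K₁) (h₁conv : Convex ℝ K₁) (h₁0 : (0:E2) ∈ K₁)
    (h₂ne : K₂.Nonempty) (h₂c : IsCompact K₂) (h₂conv : Convex ℝ K₂) (h₂0 : (0:E2) ∈ K₂)
    (hF : vflower 0 K₁ = vflower 0 K₂) : K₁ = K₂ :=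
  vflower_injective_general K₁ K₂ h₁c h₁conv h₁0 h₂c h₂conv h₂0 hF
end
end

section
/- For every set D ⊆ ℝ², the set {x ∈ ℝ² : closedBall(x, ‖x‖) ⊆ D} of centers x whose closed ball through the origin of radius ‖x‖ is contained in D, is a convex subset of ℝ². -/
/-! A point `y` lies in the ball through the origin `closedBall x ‖x‖` exactly when
`‖y‖² ≤ 2⟪y, x⟫`. So the ball avoids `y` iff `x` lies in the open half-plane `2⟪y, x⟫ < ‖y‖²`,
and the region is the intersection of these half-planes over all `y ∉ D`. -/

open Metric Real Set MeasureTheory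
open scoped RealInnerProductSpace

noncomputable section

section InnerProductSpace

variable {F : Type*} [NormedAddCommGroup F] [InnerProductSpace ℝ F]

theorem mem_closedBall_norm_iff {x y : F} : y ∈ closedBall x ‖x‖ ↔ ‖y‖ ^ 2 ≤ 2 * ⟪y, x⟫ := by
  rw [mem_closedBall, dist_eq_norm, ← sq_le_sq₀ (norm_nonneg _) (norm_nonneg _),
    norm_sub_sq_real]
  constructor <;> intro h <;> linarith

theorem setOf_closedBall_norm_subset_eq_iInter (D : Set F) :
    {x : F | closedBall x ‖x‖ ⊆ D} = ⋂ y ∈ Dᶜ, {x : F | 2 * ⟪y, x⟫ < ‖y‖ ^ 2} := by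
  ext x
  simp only [mem_ofPred_eq, mem_iInter, mem_compl_iff, ← not_le, ← mem_closedBall_norm_iff]
  exact ⟨fun hsub y hy hball => hy (hsub hball), fun h y hball => not_not.mp fun hy => h y hy hball⟩

theorem convex_setOf_closedBall_norm_subset (D : Set F) :
    Convex ℝ {x : F | closedBall x ‖x‖ ⊆ D} := by
  rw [setOf_closedBall_norm_subset_eq_iInter]
  exact convex_iInter₂ fun y _ => convex_halfSpace_lt ((2 : ℝ) • innerₛₗ ℝ y).isLinear _

end InnerProductSpace

/-- for every `D ⊆ ℝ²`, the set of centers `x` with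
`closedBall x ‖x‖ ⊆ D` is convex. -/
theorem convex_antiorthotomic_region (D : Set E2) :
    Convex ℝ {x : E2 | closedBall x ‖x‖ ⊆ D} :=
  convex_setOf_closedBall_norm_subset D
end
end

section
/- Let D ⊆ ℝ² be a compact set with 0 ∈ interior D. Then {x ∈ ℝ² : closedBall(x, ‖x‖) ⊆ D} = {z ∈ D : ‖z‖ ≤ infDist(z, frontier D)} (the set of points of D that are at least as close to the origin as to the boundary of D), and this set is compact, convex, and contains 0 in its interior. -/
open Metric Real Set MeasureTheory
open scoped RealInnerProductSpace

noncomputable section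

lemma mem_ball_iff_inner (x y : E2) : y ∈ closedBall x ‖x‖ ↔ ‖y‖ ^ 2 ≤ 2 * ⟪y, x⟫ := by
  rw [mem_closedBall, dist_eq_norm]
  constructor <;> intro h
  · nlinarith [norm_sub_sq_real y x, norm_nonneg (y - x), norm_nonneg x]
  · nlinarith [norm_sub_sq_real y x, norm_nonneg (y - x), norm_nonneg x]

lemma segment_crosses_frontier {D : Set E2} (hD : IsClosed D) {z y : E2}
    (hz : z ∈ D) (hy : y ∉ D) : ∃ w ∈ segment ℝ z y, w ∈ frontier D := by
  by_contra hcon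
  push_neg at hcon
  have hpre : IsPreconnected (segment ℝ z y) := (convex_segment z y).isPreconnected
  have hsub : segment ℝ z y ⊆ interior D ∪ (closure D)ᶜ := by
    intro w hw
    by_cases hwc : w ∈ closure D
    · left
      rcases (closure_eq_self_union_frontier D ▸ hwc) with h | h
      · by_contra hint
        exact hcon w hw ⟨subset_closure h, hint⟩
      · exact absurd h (hcon w hw)
    · exact Or.inr hwc
  have hz' : z ∈ segment ℝ z y ∩ interior D := by
    refine ⟨left_mem_segment ℝ z y, ?_⟩
    by_contra hint
    exact hcon z (left_mem_segment ℝ z y) ⟨subset_closure hz, hint⟩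
  have hy' : y ∈ segment ℝ z y ∩ (closure D)ᶜ := by
    refine ⟨right_mem_segment ℝ z y, ?_⟩
    rw [hD.closure_eq]; exact hy
  obtain ⟨w, _, hw1, hw2⟩ := hpre (interior D) (closure D)ᶜ isOpen_interior
    isClosed_closure.isOpen_compl hsub ⟨z, hz'⟩ ⟨y, hy'⟩
  exact hw2 (subset_closure (interior_subset hw1))

/-- for a compact `D` with `0` in its interior, the set
`{x : closedBall x ‖x‖ ⊆ D}` equals the set of points of `D` at least as close to the
origin as to the boundary of `D`, and it is compact, convex, with `0` in its interior. -/
theorem antiorthotomic_region_eq (D : Set E2) (hDc : IsCompact D)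
    (h0 : (0:E2) ∈ interior D) :
    {x : E2 | closedBall x ‖x‖ ⊆ D}
        = {z : E2 | z ∈ D ∧ ‖z‖ ≤ Metric.infDist z (frontier D)} ∧
    IsCompact {x : E2 | closedBall x ‖x‖ ⊆ D} ∧
    Convex ℝ {x : E2 | closedBall x ‖x‖ ⊆ D} ∧
    (0:E2) ∈ interior {x : E2 | closedBall x ‖x‖ ⊆ D} := by
  have hDcl : IsClosed D := hDc.isClosed
  have h0D : (0:E2) ∈ D := interior_subset h0
  -- the frontier is nonempty
  have hFne : (frontier D).Nonempty := by
    obtain ⟨R, hR⟩ := hDc.isBounded.subset_closedBall 0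
    have hR0 : 0 ≤ R := by simpa using (hR h0D)
    set p : E2 := EuclideanSpace.single 0 (R + 1) with hp
    have hpD : p ∉ D := by
      intro hmem
      have := hR hmem
      rw [mem_closedBall, dist_zero_right, hp, EuclideanSpace.norm_single] at this
      rw [Real.norm_eq_abs, abs_of_nonneg (by linarith)] at this
      linarith
    obtain ⟨w, _, hw⟩ := segment_crosses_frontier hDcl h0D hpD
    exact ⟨w, hw⟩
  -- The main equality
  have heq : {x : E2 | closedBall x ‖x‖ ⊆ D}
      = {z : E2 | z ∈ D ∧ ‖z‖ ≤ Metric.infDist z (frontier D)} := by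
    ext x
    simp only [mem_setOf_eq]
    constructor
    · intro hx
      refine ⟨hx (mem_closedBall_self (norm_nonneg x)), ?_⟩
      by_contra hlt
      push_neg at hlt
      obtain ⟨w, hwF, hwd⟩ := (infDist_lt_iff hFne).mp hlt
      have hwb : w ∈ ball x ‖x‖ := by rwa [mem_ball, dist_comm]
      have : w ∈ interior D :=
        (isOpen_ball.subset_interior_iff.mpr ((ball_subset_closedBall).trans hx)) hwb
      exact hwF.2 this
    · rintro ⟨hxD, hxd⟩ y hy
      by_contra hyD
      obtain ⟨w, hwseg, hwF⟩ := segment_crosses_frontier hDcl hxD hyD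
      have hsum : dist x w + dist w y = dist x y := dist_add_dist_of_mem_segment hwseg
      have h1 : infDist x (frontier D) ≤ dist x w := infDist_le_dist_of_mem hwF
      have h2 : dist x y ≤ ‖x‖ := by rw [dist_comm]; exact mem_closedBall.mp hy
      have hwy : dist w y = 0 := le_antisymm (by linarith) dist_nonneg
      have : w = y := by rwa [dist_eq_zero] at hwy
      exact hyD (this ▸ hDcl.frontier_subset hwF)
  refine ⟨heq, ?_, ?_, ?_⟩
  · -- compactness
    rw [heq]
    refine hDc.of_isClosed_subset ?_ (fun z hz => hz.1)
    exact hDcl.inter (isClosed_le continuous_norm (continuous_infDist_pt _))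
  · -- convexity
    intro x₀ hx₀ x₁ hx₁ a b ha hb hab
    intro y hy
    by_contra hyD
    have h0' : ¬ (‖y‖ ^ 2 ≤ 2 * ⟪y, x₀⟫) := fun h => hyD (hx₀ ((mem_ball_iff_inner x₀ y).mpr h))
    have h1' : ¬ (‖y‖ ^ 2 ≤ 2 * ⟪y, x₁⟫) := fun h => hyD (hx₁ ((mem_ball_iff_inner x₁ y).mpr h))
    push_neg at h0' h1'
    have hc : ‖y‖ ^ 2 ≤ 2 * (a * ⟪y, x₀⟫ + b * ⟪y, x₁⟫) := by
      have := (mem_ball_iff_inner (a • x₀ + b • x₁) y).mp hy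
      rwa [inner_add_right, real_inner_smul_right, real_inner_smul_right] at this
    rcases eq_or_lt_of_le ha with h | h
    · have hb1 : b = 1 := by linarith
      rw [← h, hb1] at hc
      simp only [zero_mul, zero_add, one_mul] at hc
      linarith
    · nlinarith [mul_le_mul_of_nonneg_left h1'.le hb]
  · -- 0 in the interior
    obtain ⟨ε, hε, hball⟩ := Metric.isOpen_iff.mp isOpen_interior 0 h0
    apply mem_interior.mpr
    refine ⟨ball 0 (ε / 2), ?_, isOpen_ball, by simp [hε]⟩
    intro x hx
    rw [mem_ball, dist_zero_right] at hx
    intro y hy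
    rw [mem_closedBall] at hy
    have : y ∈ ball (0:E2) ε := by
      rw [mem_ball, dist_zero_right]
      calc ‖y‖ = dist y 0 := by rw [dist_zero_right]
        _ ≤ dist y x + dist x 0 := dist_triangle y x 0
        _ ≤ ‖x‖ + ‖x‖ := by rw [dist_zero_right]; exact add_le_add hy le_rfl
        _ < ε := by linarith
    exact interior_subset (hball this)
end
end
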